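/- If a network N_i is obtained from a network N_{i-1} by an SNPR+ operation, then every tree displayed by N_{i-1} is also displayed by N_i, i.e., D(N_{i-1}) ⊆ D(N_i). -/

import Mathlib

/-- A rooted binary phylogenetic network on label set `X`:
vertices are `Fin n`, edges a multiset of directed edges (parallel edges allowed),
a root vertex, and a labelling of (intended) leaves by `X`. -/
structure Net (X : Type) where
  n : ℕ
  edges : Multiset (Fin n × Fin n)
  root : Fin n
  lab : X → Fin n

namespace Net

variable {X : Type}

def indeg (N : Net X) (v : Fin N.n) : ℕ := Multiset.card (N.edges.filter fun e => e.2 = v)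

def outdeg (N : Net X) (v : Fin N.n) : ℕ := Multiset.card (N.edges.filter fun e => e.1 = v)

def adj (N : Net X) (u v : Fin N.n) : Prop := (u, v) ∈ N.edges

def isLeaf (N : Net X) (v : Fin N.n) : Prop := N.indeg v = 1 ∧ N.outdeg v = 0

def isRetic (N : Net X) (v : Fin N.n) : Prop := N.indeg v = 2 ∧ N.outdeg v = 1

def isInnerTree (N : Net X) (v : Fin N.n) : Prop := N.indeg v = 1 ∧ N.outdeg v = 2

/-- Well-formedness: a rooted binary phylogenetic network with pendant root,
leaves bijectively labelled by `X`, and acyclic. -/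
def WellFormed (N : Net X) : Prop :=
  N.indeg N.root = 0 ∧ N.outdeg N.root = 1 ∧
  (∀ v, v = N.root ∨ N.isLeaf v ∨ N.isInnerTree v ∨ N.isRetic v) ∧
  Function.Injective N.lab ∧
  (∀ v, N.isLeaf v ↔ ∃ x, N.lab x = v) ∧
  (∀ v, ¬ Relation.TransGen N.adj v v)

/-- The number of reticulations of `N`. -/
def reticCount (N : Net X) : ℕ :=
  Finset.card (Finset.univ.filter fun v : Fin N.n => N.indeg v = 2 ∧ N.outdeg v = 1)

/-- A rooted binary phylogenetic tree: a well-formed network with no reticulations. -/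
def IsTree (N : Net X) : Prop := N.WellFormed ∧ N.reticCount = 0

/-- Isomorphism of labelled networks. -/
def Iso (N M : Net X) : Prop :=
  ∃ f : Fin N.n ≃ Fin M.n,
    N.edges.map (fun e => (f e.1, f e.2)) = M.edges ∧
    f N.root = M.root ∧ ∀ x, f (N.lab x) = M.lab x

/-- `S` is obtained from `T` by subdividing one edge with a single new vertex. -/
def subdivideOnce (T S : Net X) : Prop :=
  ∃ e ∈ T.edges, Iso S
    { n := T.n + 1
      edges := ((T.edges.erase e).map fun p => (Fin.castSucc p.1, Fin.castSucc p.2)) +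
        {(Fin.castSucc e.1, Fin.last T.n), (Fin.last T.n, Fin.castSucc e.2)}
      root := Fin.castSucc T.root
      lab := fun x => Fin.castSucc (T.lab x) }

/-- `S` is a subdivision of `T`. -/
def Subdivision (T S : Net X) : Prop := Relation.ReflTransGen subdivideOnce T S

/-- `N` displays `T`: some subdivision of `T` is a subgraph of `N`
(respecting root and labels). -/
def Displays (N T : Net X) : Prop :=
  ∃ S : Net X, Subdivision T S ∧
    ∃ f : Fin S.n → Fin N.n, Function.Injective f ∧
      S.edges.map (fun e => (f e.1, f e.2)) ≤ N.edges ∧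
      f S.root = N.root ∧ ∀ x, f (S.lab x) = N.lab x

/-- The edge multiset after pruning edge `(u,v)` at tree vertex `u` with parent `p`
and other child `c` (delete `(u,v)`, suppress `u`). -/
def prunedAt (N : Net X) (u v p c : Fin N.n) : Multiset (Fin N.n × Fin N.n) :=
  (((N.edges.erase (u, v)).erase (p, u)).erase (u, c)) + {(p, c)}

/-- SNPR⁰: prune the edge `(u,v)` (where `u` is a non-root tree vertex), suppress `u`,
subdivide an edge `(x,y)` that is not a descendant of `v` with the (re-used) vertex `u`,
and add the edge `(u,v)` back. -/
def SNPRzero (N N' : Net X) : Prop :=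
  ∃ u v p c x y : Fin N.n,
    N.isInnerTree u ∧ u ≠ N.root ∧
    (u, v) ∈ N.edges ∧ (p, u) ∈ N.edges.erase (u, v) ∧
    (u, c) ∈ (N.edges.erase (u, v)).erase (p, u) ∧
    (x, y) ∈ N.prunedAt u v p c ∧
    ¬ Relation.ReflTransGen (fun a b => (a, b) ∈ N.prunedAt u v p c) v x ∧
    ∃ g : Fin N'.n ≃ Fin N.n,
      N'.edges.map (fun e => (g e.1, g e.2)) =
        ((N.prunedAt u v p c).erase (x, y)) + {(x, u), (u, y), (u, v)} ∧
      g N'.root = N.root ∧ ∀ z, g (N'.lab z) = N.lab z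

/-- SNPR⁻: delete a reticulation edge `(u,v)` (with `u` a tree vertex and `v` a
reticulation) and suppress `u` and `v`. -/
def SNPRminus (N N' : Net X) : Prop :=
  ∃ u v p c q d : Fin N.n,
    N.isInnerTree u ∧ N.isRetic v ∧
    (u, v) ∈ N.edges ∧ (p, u) ∈ N.edges.erase (u, v) ∧
    (u, c) ∈ (N.edges.erase (u, v)).erase (p, u) ∧
    (q, v) ∈ ((N.edges.erase (u, v)).erase (p, u)).erase (u, c) ∧
    (v, d) ∈ (((N.edges.erase (u, v)).erase (p, u)).erase (u, c)).erase (q, v) ∧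
    ∃ g : Fin N'.n → Fin N.n, Function.Injective g ∧
      (∀ w, (w ≠ u ∧ w ≠ v) ↔ ∃ i, g i = w) ∧
      N'.edges.map (fun e => (g e.1, g e.2)) =
        (((((N.edges.erase (u, v)).erase (p, u)).erase (u, c)).erase (q, v)).erase (v, d))
          + {(p, c), (q, d)} ∧
      g N'.root = N.root ∧ ∀ z, g (N'.lab z) = N.lab z

/-- SNPR⁺ is the reversal of SNPR⁻: subdivide an edge with `v'`, subdivide a
non-descendant edge with `u'`, and add the new reticulation edge `(u',v')`. -/
def SNPRplus (N N' : Net X) : Prop := SNPRminus N' N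

/-- A single SNPR operation. -/
def SNPRstep (N N' : Net X) : Prop := SNPRzero N N' ∨ SNPRminus N N' ∨ SNPRplus N N'

/-- There is an SNPR-sequence of length `k` from `N` to `N'` all of whose networks
lie in the class `C`. -/
def seqIn (C : Net X → Prop) (N N' : Net X) (k : ℕ) : Prop :=
  ∃ f : ℕ → Net X, f 0 = N ∧ Iso (f k) N' ∧ (∀ i ≤ k, C (f i)) ∧
    ∀ i < k, SNPRstep (f i) (f (i + 1))

/-- The SNPR-distance within the class `C`. -/
noncomputable def dIn (C : Net X → Prop) (N N' : Net X) : ℕ := sInf {k | seqIn C N N' k}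

/-- The SNPR-distance in the class of all (well-formed) networks. -/
noncomputable def dSNPR (N N' : Net X) : ℕ := dIn WellFormed N N'

/-- The rSPR-distance between trees: SNPR-sequences staying inside the class of
trees; on trees only SNPR⁰ (= rSPR) moves are possible. -/
noncomputable def drSPR (T T' : Net X) : ℕ := dIn IsTree T T'

/-- Tree-child: every non-leaf vertex has a child that is not a reticulation. -/
def TreeChild (N : Net X) : Prop :=
  ∀ v : Fin N.n, 1 ≤ N.outdeg v → ∃ w, (v, w) ∈ N.edges ∧ ¬ N.isRetic w

/-- `v` is visible: some leaf is such that every directed path from the root to that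
leaf passes through `v`. -/
def Visible (N : Net X) (v : Fin N.n) : Prop :=
  ∃ x : X, ∀ l : List (Fin N.n), l.Chain' N.adj →
    l.head? = some N.root → l.getLast? = some (N.lab x) → v ∈ l

/-- Reticulation-visible network. -/
def ReticVisible (N : Net X) : Prop := ∀ v, N.isRetic v → N.Visible v

/-- Tree-based: some tree has an embedding into `N` covering every vertex of `N`. -/
def TreeBased (N : Net X) : Prop :=
  ∃ T : Net X, T.IsTree ∧ ∃ S : Net X, Subdivision T S ∧
    ∃ f : Fin S.n → Fin N.n, Function.Bijective f ∧
      S.edges.map (fun e => (f e.1, f e.2)) ≤ N.edges ∧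
      f S.root = N.root ∧ ∀ x, f (S.lab x) = N.lab x

/-- `N` has a pair of parallel edges. -/
def HasParallel (N : Net X) : Prop := ∃ e, 2 ≤ N.edges.count e

/-! ### Agreement forests -/

/-- Well-formedness of a component of an agreement forest: a rooted binary tree
whose leaves are exactly the labelled vertices (a label may also sit at the root). -/
def WFComp {α : Type} (C : Net α) : Prop :=
  Function.Injective C.lab ∧
  (∀ v, ¬ Relation.TransGen C.adj v v) ∧
  Multiset.card C.edges + 1 = C.n ∧
  C.indeg C.root = 0 ∧ (∀ v, v ≠ C.root → C.indeg v = 1) ∧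
  (∀ v, C.outdeg v ≤ 2) ∧
  (∀ v, C.outdeg v = 0 → ∃ a, C.lab a = v) ∧
  (∀ a, C.outdeg (C.lab a) = 0 ∨ C.lab a = C.root)

/-- An embedding of a forest component `C`, labelled over a subset `s` of
`X ∪ {ρ}` (with `none` playing the role of the root label `ρ`), into a host
network `H`, using exactly the edge multiset `E` of `H`. -/
def CompEmbed {s : Finset (Option X)} (C : Net {a : Option X // a ∈ s})
    (H : Net X) (E : Multiset (Fin H.n × Fin H.n)) : Prop :=
  ∃ S, Subdivision C S ∧ ∃ f : Fin S.n → Fin H.n, Function.Injective f ∧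
    S.edges.map (fun e => (f e.1, f e.2)) = E ∧
    ∀ a : {a : Option X // a ∈ s}, f (S.lab a) = Option.elim a.1 H.root H.lab

/-- `E` is the edge multiset of a directed path (the image of a subdivided single
disagreement edge) in `H`. -/
def IsDipath (H : Net X) (E : Multiset (Fin H.n × Fin H.n)) : Prop :=
  ∃ l : List (Fin H.n), l.Nodup ∧ 2 ≤ l.length ∧ E = ↑(l.zip l.tail)

/-- An agreement forest for a tree `T` and a network `N` on `X`:
tree components `T_ρ = comp 0, T_1, …, T_k` on blocks partitioning `X ∪ {ρ}`
together with `r = reticCount N` disagreement edges, admitting simultaneous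
edge-disjoint embeddings into `T` covering all edges of `T`, and (together with
the disagreement edges) into `N` covering all edges of `N`. -/
structure AF (T N : Net X) where
  k : ℕ
  r : ℕ
  blocks : Fin (k + 1) → Finset (Option X)
  comp : (i : Fin (k + 1)) → Net {a : Option X // a ∈ blocks i}
  compWF : ∀ i, WFComp (comp i)
  rhoBlock : (none : Option X) ∈ blocks 0
  rhoRoot : (comp 0).lab ⟨none, rhoBlock⟩ = (comp 0).root
  partition : ∀ a : Option X, ∃! i, a ∈ blocks i
  reticEq : r = N.reticCount
  embT : ∃ E : Fin (k + 1) → Multiset (Fin T.n × Fin T.n),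
    (∀ i, CompEmbed (comp i) T (E i)) ∧ (∑ i, E i) = T.edges
  embN : ∃ (E : Fin (k + 1) → Multiset (Fin N.n × Fin N.n))
      (P : Fin r → Multiset (Fin N.n × Fin N.n)),
    (∀ i, CompEmbed (comp i) N (E i)) ∧ (∀ j, IsDipath N (P j)) ∧
    (∑ i, E i) + (∑ j, P j) = N.edges

/-- `m(T,N)`: the size minus one, `k + r`, of a maximum agreement forest. -/
noncomputable def mAF (T N : Net X) : ℕ := sInf {m | ∃ F : AF T N, F.k + F.r = m}

end Net

/-!
Write the SNPR⁺ move as its inverse SNPR⁻ from `N'` to `N`: the vertices of `N` are those of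
`N'` other than `u`, `v`, and the edges `(p, c)`, `(q, d)` of `N` are the paths `p → u → c` and
`q → v → d` of `N'`. Transporting an embedding of a subdivision of `T` into `N'` and subdividing
the images of `(p, c)` and `(q, d)` once more, with the fresh vertices `u` and `v`, gives an
embedding into `N'` that avoids the new edge `(u, v)`.
-/

namespace Net

variable {X : Type}

def subdivide (S : Net X) (e : Fin S.n × Fin S.n) : Net X where
  n := S.n + 1
  edges := ((S.edges.erase e).map fun p => (Fin.castSucc p.1, Fin.castSucc p.2)) +
    {(Fin.castSucc e.1, Fin.last S.n), (Fin.last S.n, Fin.castSucc e.2)}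
  root := Fin.castSucc S.root
  lab x := Fin.castSucc (S.lab x)

theorem subdivideOnce_subdivide {S : Net X} {e : Fin S.n × Fin S.n} (he : e ∈ S.edges) :
    subdivideOnce S (S.subdivide e) :=
  ⟨e, he, Equiv.refl _, Multiset.map_id _, rfl, fun _ => rfl⟩

theorem map_edges_subdivide {m : ℕ} (S : Net X) (e : Fin S.n × Fin S.n) (f : Fin S.n → Fin m)
    (w : Fin m) :
    (S.subdivide e).edges.map (Prod.map (Fin.snoc f w) (Fin.snoc f w)) =
      (f e.1, w) ::ₘ (w, f e.2) ::ₘ (S.edges.erase e).map (Prod.map f f) := by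
  simp only [subdivide, Multiset.insert_eq_cons, add_comm, Multiset.cons_add,
    Multiset.singleton_add, Multiset.map_cons, Prod.map_apply, Fin.snoc_castSucc, Fin.snoc_last,
    Multiset.map_map, Function.comp_apply, Multiset.cons_inj_right]
  rfl

/-- The vertices in `W` are kept free, to serve later as fresh subdivision vertices in
`EmbedsAvoiding.reroute`. -/
def EmbedsAvoiding (T : Net X) {m : ℕ} (B : Multiset (Fin m × Fin m)) (r : Fin m)
    (l : X → Fin m) (W : Set (Fin m)) : Prop :=
  ∃ S, Subdivision T S ∧ ∃ f : Fin S.n → Fin m, Function.Injective f ∧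
    S.edges.map (Prod.map f f) ≤ B ∧ f S.root = r ∧ (∀ x, f (S.lab x) = l x) ∧ ∀ i, f i ∉ W

theorem displays_iff_embedsAvoiding {N T : Net X} :
    N.Displays T ↔ T.EmbedsAvoiding N.edges N.root N.lab ∅ := by
  simp only [Displays, EmbedsAvoiding, Set.mem_empty_iff_false, not_false_eq_true,
    implies_true, and_true]
  rfl

namespace EmbedsAvoiding

variable {T : Net X} {m : ℕ} {B : Multiset (Fin m × Fin m)} {r : Fin m} {l : X → Fin m}
  {W : Set (Fin m)}

theorem mono (h : T.EmbedsAvoiding B r l W) {B' : Multiset (Fin m × Fin m)} (hB : B ≤ B') :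
    T.EmbedsAvoiding B' r l W := by
  obtain ⟨S, hS, f, hf, hle, hr, hl, hW⟩ := h
  exact ⟨S, hS, f, hf, hle.trans hB, hr, hl, hW⟩

theorem map (h : T.EmbedsAvoiding B r l W) {m' : ℕ} {g : Fin m → Fin m'}
    (hg : Function.Injective g) {W' : Set (Fin m')} (hW' : g ⁻¹' W' ⊆ W) :
    T.EmbedsAvoiding (B.map (Prod.map g g)) (g r) (g ∘ l) W' := by
  obtain ⟨S, hS, f, hf, hle, hr, hl, hW⟩ := h
  refine ⟨S, hS, g ∘ f, hg.comp hf, ?_, by simp [hr], by simp [hl], fun i hi => hW i (hW' hi)⟩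
  rw [← Prod.map_comp_map, ← Multiset.map_map]
  exact Multiset.map_le_map hle

/-- If the embedding uses `(a, b)`, subdivide that edge of the subdivision once more and send
the new vertex to `w`. -/
theorem reroute {a b w : Fin m} (hw : w ∉ W)
    (h : T.EmbedsAvoiding ((a, b) ::ₘ B) r l (insert w W)) :
    T.EmbedsAvoiding ((a, w) ::ₘ (w, b) ::ₘ B) r l W := by
  classical
  obtain ⟨S, hS, f, hf, hle, hr, hl, hW⟩ := h
  by_cases hab : (a, b) ∈ S.edges.map (Prod.map f f)
  case neg =>
    refine ⟨S, hS, f, hf, ?_, hr, hl, fun i hi => hW i (Or.inr hi)⟩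
    exact ((Multiset.le_cons_of_notMem hab).1 hle).trans
      ((Multiset.le_cons_self _ _).trans (Multiset.le_cons_self _ _))
  case pos =>
    obtain ⟨e, he, hfe⟩ := Multiset.mem_map.1 hab
    have hwf : w ∉ Set.range f := fun ⟨i, hi⟩ => hW i (Or.inl hi)
    refine ⟨S.subdivide e, hS.tail (subdivideOnce_subdivide he), Fin.snoc f w,
      Fin.snoc_injective_of_injective hf hwf, ?_, by simp [subdivide, hr],
      by simp [subdivide, hl], ?_⟩
    · obtain ⟨rfl, rfl⟩ := Prod.mk.inj (hfe.symm : (a, b) = (f e.1, f e.2))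
      refine (map_edges_subdivide S e f w).trans_le ?_
      rw [Multiset.map_erase _ (hf.prodMap hf)]
      exact Multiset.cons_le_cons _ (Multiset.cons_le_cons _ (Multiset.erase_le_iff_le_cons.2 hle))
    · intro i
      induction i using Fin.lastCases with
      | last => simpa [subdivide] using hw
      | cast i => simpa [subdivide] using fun hi => hW i (Or.inr hi)

end EmbedsAvoiding

end Net

open Net in
theorem displays_mono_of_SNPRplus_general {X : Type} (N N' : Net X) (hstep : SNPRplus N N') :
    ∀ T : Net X, T.IsTree → N.Displays T → N'.Displays T := by
  intro T _ hD
  obtain ⟨u, v, p, c, q, d, hu, hv, huv, hpu, huc, hqv, hvd, g, hg, hrange, hmap, hroot, hlab⟩ :=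
    hstep
  set A := (((((N'.edges.erase (u, v)).erase (p, u)).erase (u, c)).erase (q, v)).erase (v, d))
  have hN' : N'.edges = (u, v) ::ₘ (p, u) ::ₘ (u, c) ::ₘ (q, v) ::ₘ (v, d) ::ₘ A := by
    rw [Multiset.cons_erase hvd, Multiset.cons_erase hqv, Multiset.cons_erase huc,
      Multiset.cons_erase hpu, Multiset.cons_erase huv]
  have hN : N.edges.map (Prod.map g g) = (p, c) ::ₘ (q, d) ::ₘ A :=
    hmap.trans (by rw [Multiset.insert_eq_cons, Multiset.add_cons, Multiset.add_comm,
      Multiset.singleton_add])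
  have hu_ne_v : u ≠ v := fun h => by simpa [isInnerTree, isRetic, h, hv.1] using hu.1
  have hgW : g ⁻¹' {v, u} ⊆ ∅ := fun i hi => by
    rcases hi with hi | hi
    · exact ((hrange v).2 ⟨i, hi⟩).2 rfl
    · exact ((hrange u).2 ⟨i, hi⟩).1 rfl
  have h₀ := (displays_iff_embedsAvoiding.1 hD).map hg hgW
  rw [hN, hroot, show g ∘ N.lab = N'.lab from funext hlab, Multiset.cons_swap] at h₀
  have h₁ := h₀.reroute (w := v) (W := {u}) hu_ne_v.symm
  rw [Multiset.cons_swap (v, d), Multiset.cons_swap (q, v), ← insert_empty_eq u] at h₁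
  have h₂ := h₁.reroute (w := u) (W := ∅) (Set.notMem_empty u)
  exact displays_iff_embedsAvoiding.2 (h₂.mono (hN' ▸ Multiset.le_cons_self _ _))

open Net in
/-- If `N'` is obtained from `N` by an SNPR⁺ operation, then every tree displayed
by `N` is also displayed by `N'`, i.e. `D(N) ⊆ D(N')`. -/
theorem displays_mono_of_SNPRplus {X : Type} (N N' : Net X)
    (hN : N.WellFormed) (hN' : N'.WellFormed) (hstep : SNPRplus N N') :
    ∀ T : Net X, T.IsTree → N.Displays T → N'.Displays T :=
  displays_mono_of_SNPRplus_general N N' hstep
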